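/- Fix K ≥ 1, dimensions d₁,…,d_K, m, n, T ≥ 1, reals λ₁ ≥ 0, λ₂ ≥ 0, α ≥ 0, matrices Bᵏ ∈ ℝ^{d_k×m}, Xᵏ ∈ ℝ^{d_k×n}, and families A_l = (A_lᵏ)_{k=1}^K of m×n real matrices for l = 1,…,T. With ρᵢ, L, F, and the surrogate G defined as in Theorem 1, let (W_s)_{s≥1} be a sequence of families such that for every s, ρᵢ(W_s) ≠ 0 and ρᵢ(W_s − A_l) ≠ 0 for all i and l, and W_{s+1} minimizes the surrogate G built from W_s. Then the sequence of objective values (F(W_s))_{s≥1} is non-increasing and, being bounded below by 0, converges to a real limit. -/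

import Mathlib

open Finset Filter

/-- The `i`-th row norm of a multimodal family of matrices. -/
noncomputable def famRho {K m n : ℕ} (W : Fin K → Matrix (Fin m) (Fin n) ℝ) (i : Fin m) : ℝ :=
  Real.sqrt (∑ k, ∑ j, (W k i j) ^ 2)

/-- The multimodal least-squares reconstruction term `Σ_k ‖BᵏWᵏ − Xᵏ‖_F²`. -/
noncomputable def famLS {K m n : ℕ} {d : Fin K → ℕ}
    (B : ∀ k, Matrix (Fin (d k)) (Fin m) ℝ) (X : ∀ k, Matrix (Fin (d k)) (Fin n) ℝ)
    (W : Fin K → Matrix (Fin m) (Fin n) ℝ) : ℝ :=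
  ∑ k, ∑ p, ∑ j, ((B k * W k - X k) p j) ^ 2

/-!
Majorization–minimization. For `b > 0` the function `x ↦ x - x² / (2b)` is maximized at `x = b`,
so `F - G(W_s, ·)`, a nonnegative combination of such functions of the row norms, is maximized at
`W_s`. Hence any minimizer `W_{s+1}` of `G(W_s, ·)` satisfies `F(W_{s+1}) ≤ F(W_s)`, and a
non-increasing sequence bounded below by `0` converges.
-/

theorem sub_sq_div_two_mul_le {b : ℝ} (hb : 0 < b) (x : ℝ) :
    x - x ^ 2 / (2 * b) ≤ b - b ^ 2 / (2 * b) := by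
  have key : b - b ^ 2 / (2 * b) - (x - x ^ 2 / (2 * b)) = (x - b) ^ 2 / (2 * b) := by
    field_simp
    ring
  have : 0 ≤ (x - b) ^ 2 / (2 * b) := by positivity
  linarith

theorem le_of_sub_le_sub_self_of_le {α : Type*} {F : α → ℝ} {G : α → α → ℝ} {x y : α}
    (hgap : ∀ v, F v - G x v ≤ F x - G x x) (hmin : G x y ≤ G x x) : F y ≤ F x := by
  linarith [hgap y]

section Family

variable {K m n : ℕ}

theorem famRho_nonneg (W : Fin K → Matrix (Fin m) (Fin n) ℝ) (i : Fin m) : 0 ≤ famRho W i :=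
  Real.sqrt_nonneg _

theorem famLS_nonneg {d : Fin K → ℕ} (B : ∀ k, Matrix (Fin (d k)) (Fin m) ℝ)
    (X : ∀ k, Matrix (Fin (d k)) (Fin n) ℝ) (W : Fin K → Matrix (Fin m) (Fin n) ℝ) :
    0 ≤ famLS B X W := by
  unfold famLS
  positivity

/-- The part of `F(V) - G(W_s, V)` contributed by one row-sparsity penalty. -/
noncomputable def rowGap (Ws V : Fin K → Matrix (Fin m) (Fin n) ℝ) : ℝ :=
  ∑ i, (famRho V i - famRho V i ^ 2 / (2 * famRho Ws i))

theorem rowGap_le_rowGap_self {Ws : Fin K → Matrix (Fin m) (Fin n) ℝ}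
    (hWs : ∀ i, famRho Ws i ≠ 0) (V : Fin K → Matrix (Fin m) (Fin n) ℝ) :
    rowGap Ws V ≤ rowGap Ws Ws :=
  sum_le_sum fun i _ =>
    sub_sq_div_two_mul_le ((famRho_nonneg Ws i).lt_of_ne' (hWs i)) _

end Family

theorem alg1_objective_converges_general
    (K m n T : ℕ)
    (d : Fin K → ℕ)
    (lam1 lam2 α : ℝ) (hlam1 : 0 ≤ lam1) (hlam2 : 0 ≤ lam2) (hα : 0 ≤ α)
    (B : ∀ k, Matrix (Fin (d k)) (Fin m) ℝ) (X : ∀ k, Matrix (Fin (d k)) (Fin n) ℝ)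
    (A : Fin T → Fin K → Matrix (Fin m) (Fin n) ℝ)
    (F : (Fin K → Matrix (Fin m) (Fin n) ℝ) → ℝ)
    (hF : ∀ W, F W = famLS B X W + lam1 * ∑ i, famRho W i +
        lam2 * ∑ l : Fin T, α ^ ((l : ℕ) + 1) *
          ∑ i, famRho (fun k => W k - A l k) i)
    (G : (Fin K → Matrix (Fin m) (Fin n) ℝ) → (Fin K → Matrix (Fin m) (Fin n) ℝ) → ℝ)
    (hG : ∀ Ws W, G Ws W = famLS B X W +
        lam1 * ∑ i, (famRho W i) ^ 2 / (2 * famRho Ws i) +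
        lam2 * ∑ l : Fin T, α ^ ((l : ℕ) + 1) *
          ∑ i, (famRho (fun k => W k - A l k) i) ^ 2 /
            (2 * famRho (fun k => Ws k - A l k) i))
    (W : ℕ → (Fin K → Matrix (Fin m) (Fin n) ℝ))
    (hW : ∀ s, ∀ i, famRho (W s) i ≠ 0)
    (hWA : ∀ s, ∀ (l : Fin T) (i : Fin m), famRho (fun k => W s k - A l k) i ≠ 0)
    (hmin : ∀ s, ∀ V, G (W s) (W (s + 1)) ≤ G (W s) V) :
    (∀ s, F (W (s + 1)) ≤ F (W s)) ∧
      ∃ c : ℝ, Tendsto (fun s => F (W s)) atTop (nhds c) := by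
  have hgap : ∀ Ws V, F V - G Ws V = lam1 * rowGap Ws V + lam2 * ∑ l : Fin T,
      α ^ ((l : ℕ) + 1) * rowGap (fun k => Ws k - A l k) (fun k => V k - A l k) := by
    intro Ws V
    simp only [hF, hG, rowGap, sum_sub_distrib, mul_sub]
    ring
  have hdec : ∀ s, F (W (s + 1)) ≤ F (W s) := by
    refine fun s => le_of_sub_le_sub_self_of_le (fun V => ?_) (hmin s (W s))
    rw [hgap, hgap]
    gcongr with l
    · exact rowGap_le_rowGap_self (hW s) V
    · exact rowGap_le_rowGap_self (hWA s l) _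
  have hF_nonneg : ∀ V, 0 ≤ F V := fun V => by
    rw [hF]
    have := famLS_nonneg B X V
    unfold famRho
    positivity
  exact ⟨hdec, _, tendsto_atTop_ciInf (antitone_nat_of_succ_le hdec)
    ⟨0, by rintro _ ⟨s, rfl⟩; exact hF_nonneg _⟩⟩

/-- Along iterates of Algorithm 1 (each `W (s+1)` minimizes the surrogate built from `W s`,
whose row norms are nonzero), the objective values `F (W s)` form a non-increasing
sequence which, being bounded below by `0`, converges to a real limit. -/
theorem alg1_objective_converges
    (K m n T : ℕ) (hK : 1 ≤ K) (hT : 1 ≤ T)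
    (d : Fin K → ℕ)
    (lam1 lam2 α : ℝ) (hlam1 : 0 ≤ lam1) (hlam2 : 0 ≤ lam2) (hα : 0 ≤ α)
    (B : ∀ k, Matrix (Fin (d k)) (Fin m) ℝ) (X : ∀ k, Matrix (Fin (d k)) (Fin n) ℝ)
    (A : Fin T → Fin K → Matrix (Fin m) (Fin n) ℝ)
    (F : (Fin K → Matrix (Fin m) (Fin n) ℝ) → ℝ)
    (hF : ∀ W, F W = famLS B X W + lam1 * ∑ i, famRho W i +
        lam2 * ∑ l : Fin T, α ^ ((l : ℕ) + 1) *
          ∑ i, famRho (fun k => W k - A l k) i)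
    (G : (Fin K → Matrix (Fin m) (Fin n) ℝ) → (Fin K → Matrix (Fin m) (Fin n) ℝ) → ℝ)
    (hG : ∀ Ws W, G Ws W = famLS B X W +
        lam1 * ∑ i, (famRho W i) ^ 2 / (2 * famRho Ws i) +
        lam2 * ∑ l : Fin T, α ^ ((l : ℕ) + 1) *
          ∑ i, (famRho (fun k => W k - A l k) i) ^ 2 /
            (2 * famRho (fun k => Ws k - A l k) i))
    (W : ℕ → (Fin K → Matrix (Fin m) (Fin n) ℝ))
    (hW : ∀ s, ∀ i, famRho (W s) i ≠ 0)
    (hWA : ∀ s, ∀ (l : Fin T) (i : Fin m), famRho (fun k => W s k - A l k) i ≠ 0)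
    (hmin : ∀ s, ∀ V, G (W s) (W (s + 1)) ≤ G (W s) V) :
    (∀ s, F (W (s + 1)) ≤ F (W s)) ∧
      ∃ c : ℝ, Tendsto (fun s => F (W s)) atTop (nhds c) :=
  alg1_objective_converges_general K m n T d lam1 lam2 α hlam1 hlam2 hα B X A F hF G hG W hW hWA
    hmin
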